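/- Let A ∈ M_{2m}(ℝ) and B ∈ M_{2n}(ℝ) be positive definite. Then the multiset of symplectic eigenvalues of the expanding sum A ⊞ B is the union of the multisets of symplectic eigenvalues of A and of B. -/

import Mathlib

/-!
Regrouping the coordinates of `(α ⊕ β) ⊕ (α ⊕ β)` as `(α ⊕ α) ⊕ (β ⊕ β)` is a permutation
similarity that turns `J` into `J ⊕ J` and `A ⊞ B` into `A ⊕ B`. Hence `J (A ⊞ B)` is similar to
`J A ⊕ J B`, whose characteristic polynomial is the product of those of `J A` and `J B`; the
multiset of roots of a product of nonzero polynomials is the sum of the multisets of roots.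
-/

open Matrix Finset

noncomputable section

/-- The standard symplectic form matrix over index type `ι ⊕ ι`. -/
def Jm (ι : Type*) [DecidableEq ι] : Matrix (ι ⊕ ι) (ι ⊕ ι) ℝ :=
  Matrix.fromBlocks 0 1 (-1) 0

/-- `W` is symplectic if `Wᵀ J W = J`. -/
def IsSymplectic {ι : Type*} [Fintype ι] [DecidableEq ι] (W : Matrix (ι ⊕ ι) (ι ⊕ ι) ℝ) : Prop :=
  Wᵀ * Jm ι * W = Jm ι


/-- Expanding sum of two matrices in 2×2 block form. -/
def esum {α β : Type*} (A : Matrix (α ⊕ α) (α ⊕ α) ℝ) (B : Matrix (β ⊕ β) (β ⊕ β) ℝ) :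
    Matrix ((α ⊕ β) ⊕ (α ⊕ β)) ((α ⊕ β) ⊕ (α ⊕ β)) ℝ :=
  Matrix.fromBlocks
    (Matrix.fromBlocks A.toBlocks₁₁ 0 0 B.toBlocks₁₁)
    (Matrix.fromBlocks A.toBlocks₁₂ 0 0 B.toBlocks₁₂)
    (Matrix.fromBlocks A.toBlocks₂₁ 0 0 B.toBlocks₂₁)
    (Matrix.fromBlocks A.toBlocks₂₂ 0 0 B.toBlocks₂₂)


/-- Multiset of moduli of the complex eigenvalues of `J * A`; each symplectic
eigenvalue of `A` occurs twice in this multiset. -/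
def sympModuli {ι : Type*} [Fintype ι] [DecidableEq ι] (A : Matrix (ι ⊕ ι) (ι ⊕ ι) ℝ) :
    Multiset ℝ :=
  (((Jm ι * A).map (Complex.ofReal ·)).charpoly.roots).map (‖·‖)

open Polynomial

theorem sympModuli_eq_map_roots {ι : Type*} [Fintype ι] [DecidableEq ι]
    (A : Matrix (ι ⊕ ι) (ι ⊕ ι) ℝ) :
    sympModuli A = ((Jm ι * A).charpoly.map Complex.ofRealHom).roots.map (‖·‖) := by
  rw [sympModuli, ← charpoly_map]
  rfl

variable {α β : Type*}

theorem reindex_sumSumSumComm_esum (A : Matrix (α ⊕ α) (α ⊕ α) ℝ)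
    (B : Matrix (β ⊕ β) (β ⊕ β) ℝ) :
    reindex (Equiv.sumSumSumComm α β α β) (Equiv.sumSumSumComm α β α β) (esum A B) =
      fromBlocks A 0 0 B := by
  ext (i | i) (j | j) <;> rcases i with i | i <;> rcases j with j | j <;>
    simp [esum, Equiv.sumSumSumComm, toBlocks₁₁, toBlocks₁₂, toBlocks₂₁, toBlocks₂₂]

theorem reindex_sumSumSumComm_Jm [DecidableEq α] [DecidableEq β] :
    reindex (Equiv.sumSumSumComm α β α β) (Equiv.sumSumSumComm α β α β) (Jm (α ⊕ β)) =
      fromBlocks (Jm α) 0 0 (Jm β) := by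
  ext (i | i) (j | j) <;> rcases i with i | i <;> rcases j with j | j <;>
    simp [Jm, Equiv.sumSumSumComm, one_apply]

variable [Fintype α] [Fintype β] [DecidableEq α] [DecidableEq β]

theorem reindex_sumSumSumComm_Jm_mul_esum (A : Matrix (α ⊕ α) (α ⊕ α) ℝ)
    (B : Matrix (β ⊕ β) (β ⊕ β) ℝ) :
    reindex (Equiv.sumSumSumComm α β α β) (Equiv.sumSumSumComm α β α β)
        (Jm (α ⊕ β) * esum A B) = fromBlocks (Jm α * A) 0 0 (Jm β * B) := by
  let e := Equiv.sumSumSumComm α β α β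
  calc reindex e e (Jm (α ⊕ β) * esum A B)
      = reindex e e (Jm (α ⊕ β)) * reindex e e (esum A B) := by
        simp only [reindex_apply, submatrix_mul_equiv]
    _ = fromBlocks (Jm α * A) 0 0 (Jm β * B) := by
        rw [reindex_sumSumSumComm_Jm, reindex_sumSumSumComm_esum, fromBlocks_multiply]
        simp

theorem charpoly_Jm_mul_esum (A : Matrix (α ⊕ α) (α ⊕ α) ℝ) (B : Matrix (β ⊕ β) (β ⊕ β) ℝ) :
    (Jm (α ⊕ β) * esum A B).charpoly = (Jm α * A).charpoly * (Jm β * B).charpoly := by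
  rw [← charpoly_reindex (Equiv.sumSumSumComm α β α β), reindex_sumSumSumComm_Jm_mul_esum,
    charpoly_fromBlocks_zero₂₁]

theorem sympModuli_esum_general {m n : ℕ} (A : Matrix (Fin m ⊕ Fin m) (Fin m ⊕ Fin m) ℝ)
    (B : Matrix (Fin n ⊕ Fin n) (Fin n ⊕ Fin n) ℝ) :
    sympModuli (esum A B) = sympModuli A + sympModuli B := by
  have hmonicA := (charpoly_monic (Jm (Fin m) * A)).map Complex.ofRealHom
  have hmonicB := (charpoly_monic (Jm (Fin n) * B)).map Complex.ofRealHom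
  rw [sympModuli_eq_map_roots, sympModuli_eq_map_roots, sympModuli_eq_map_roots,
    charpoly_Jm_mul_esum, Polynomial.map_mul, roots_mul (hmonicA.mul hmonicB).ne_zero, Multiset.map_add]

theorem sympModuli_esum {m n : ℕ} (A : Matrix (Fin m ⊕ Fin m) (Fin m ⊕ Fin m) ℝ)
    (B : Matrix (Fin n ⊕ Fin n) (Fin n ⊕ Fin n) ℝ) (hA : A.PosDef) (hB : B.PosDef) :
    sympModuli (esum A B) = sympModuli A + sympModuli B :=
  sympModuli_esum_general A B
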